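/- arXiv:2406.12166 — 3 statements merged into one kernel-verified Lean document; each statement's English description precedes it below -/
import Mathlib

section
/- Let A be a commutative ring and r ≥ 1. For each symbol h ∈ {f, g, e}, let n^h assign an element of A to every subset of {1,…,r}, with n^h(∅) = 1. Assume the convolution identity: for every nonempty subset S of {1,…,r}, n^e(S) = Σ n^f(I)·n^g(J), the sum over all ordered pairs (I, J) of disjoint (possibly empty) subsets with I ∪ J = S. For each h, define Δ^h on nonempty subsets recursively on cardinality by Δ^h(S) = n^h(S) − Σ_π ∏_{B ∈ π} Δ^h(B), the sum over all set partitions π of S into at least two blocks. Then Δ^e(S) = Δ^f(S) + Δ^g(S) for every nonempty subset S of {1,…,r}. -/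
/- A set partition of the finite set `S ⊆ Fin r`, encoded as a finite collection of
pairwise disjoint nonempty blocks whose union is `S`. -/
open Classical in
noncomputable def setPartitions {r : ℕ} (S : Finset (Fin r)) :
    Finset (Finset (Finset (Fin r))) :=
  Finset.univ.filter fun π =>
    (∀ B ∈ π, B.Nonempty) ∧ (∀ B ∈ π, ∀ C ∈ π, B ≠ C → Disjoint B C) ∧ π.sup id = S

open Classical

namespace SPaux

variable {r : ℕ}

lemma mem_sp {S : Finset (Fin r)} {π : Finset (Finset (Fin r))} :
    π ∈ setPartitions S ↔
      (∀ B ∈ π, B.Nonempty) ∧ (∀ B ∈ π, ∀ C ∈ π, B ≠ C → Disjoint B C) ∧ π.sup id = S := by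
  simp [setPartitions]

lemma subset_mem_sp {S : Finset (Fin r)} {π σ : Finset (Finset (Fin r))}
    (hπ : π ∈ setPartitions S) (hσ : σ ⊆ π) : σ ∈ setPartitions (σ.sup id) := by
  rw [mem_sp] at hπ ⊢
  exact ⟨fun B hB => hπ.1 B (hσ hB), fun B hB C hC h => hπ.2.1 B (hσ hB) C (hσ hC) h, rfl⟩

lemma sp_empty : setPartitions (∅ : Finset (Fin r)) = {∅} := by
  ext π
  rw [mem_sp, Finset.mem_singleton]
  constructor
  · rintro ⟨h1, _, h3⟩
    by_contra hne
    obtain ⟨B, hB⟩ := Finset.nonempty_iff_ne_empty.mpr hne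
    have : B ⊆ π.sup id := Finset.le_sup (f := id) hB
    rw [h3] at this
    exact (h1 B hB).ne_empty (Finset.subset_empty.mp this)
  · rintro rfl; simp

lemma sp_filter_lt {S : Finset (Fin r)} (hS : S.Nonempty) :
    (setPartitions S).filter (fun π => ¬ 2 ≤ π.card) = {{S}} := by
  ext π
  rw [Finset.mem_filter, mem_sp, Finset.mem_singleton]
  constructor
  · rintro ⟨⟨h1, h2, h3⟩, hc⟩
    push_neg at hc
    interval_cases h : π.card
    · rw [Finset.card_eq_zero] at h
      subst h; simp at h3; exact absurd h3.symm hS.ne_empty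
    · rw [Finset.card_eq_one] at h
      obtain ⟨B, rfl⟩ := h
      simp only [Finset.sup_singleton, id] at h3
      rw [h3]
  · rintro rfl
    refine ⟨⟨fun B hB => ?_, fun B hB C hC h => ?_, by simp⟩, by simp⟩
    · simp at hB; subst hB; exact hS
    · simp at hB hC; subst hB; subst hC; exact absurd rfl h

/-- Sum over all partitions splits off the one-block partition. -/
lemma sum_sp_split {A : Type*} [CommRing A] (D : Finset (Fin r) → A)
    {S : Finset (Fin r)} (hS : S.Nonempty) :
    ∑ π ∈ setPartitions S, ∏ B ∈ π, D B =
      (∑ π ∈ (setPartitions S).filter (fun π => 2 ≤ π.card), ∏ B ∈ π, D B) + D S := by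
  rw [← Finset.sum_filter_add_sum_filter_not (setPartitions S) (fun π => 2 ≤ π.card),
    sp_filter_lt hS]
  simp

lemma n_as_sum {A : Type*} [CommRing A] (n D : Finset (Fin r) → A) (hn0 : n ∅ = 1)
    (hD : ∀ S : Finset (Fin r), S.Nonempty →
      D S = n S - ∑ π ∈ (setPartitions S).filter (fun π => 2 ≤ π.card), ∏ B ∈ π, D B) :
    ∀ S : Finset (Fin r), n S = ∑ π ∈ setPartitions S, ∏ B ∈ π, D B := by
  intro S
  rcases S.eq_empty_or_nonempty with rfl | hS
  · rw [sp_empty]; simpa using hn0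
  · rw [sum_sp_split D hS, hD S hS]; ring

/-- The key bijection: convolution of partition-sums equals the partition-sum of sums. -/
lemma conv_eq {A : Type*} [CommRing A] (a b : Finset (Fin r) → A) (S : Finset (Fin r)) :
    ∑ p ∈ Finset.univ.filter
        (fun p : Finset (Fin r) × Finset (Fin r) => Disjoint p.1 p.2 ∧ p.1 ∪ p.2 = S),
      (∑ σ ∈ setPartitions p.1, ∏ B ∈ σ, a B) * (∑ τ ∈ setPartitions p.2, ∏ B ∈ τ, b B)
    = ∑ π ∈ setPartitions S, ∏ B ∈ π, (a B + b B) := by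
  have hRHS : ∑ π ∈ setPartitions S, ∏ B ∈ π, (a B + b B)
      = ∑ x ∈ (setPartitions S).sigma (fun π => π.powerset),
          (∏ B ∈ x.2, a B) * ∏ B ∈ x.1 \ x.2, b B := by
    rw [Finset.sum_sigma]
    exact Finset.sum_congr rfl fun π _ => Finset.prod_add a b π
  have hLHS : ∑ p ∈ Finset.univ.filter
        (fun p : Finset (Fin r) × Finset (Fin r) => Disjoint p.1 p.2 ∧ p.1 ∪ p.2 = S),
      (∑ σ ∈ setPartitions p.1, ∏ B ∈ σ, a B) * (∑ τ ∈ setPartitions p.2, ∏ B ∈ τ, b B)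
      = ∑ x ∈ (Finset.univ.filter
          (fun p : Finset (Fin r) × Finset (Fin r) => Disjoint p.1 p.2 ∧ p.1 ∪ p.2 = S)).sigma
          (fun p => setPartitions p.1 ×ˢ setPartitions p.2),
          (∏ B ∈ x.2.1, a B) * ∏ B ∈ x.2.2, b B := by
    rw [Finset.sum_sigma]
    refine Finset.sum_congr rfl fun p _ => ?_
    rw [Finset.sum_mul_sum, Finset.sum_product]
  rw [hLHS, hRHS]
  refine Finset.sum_nbij' (fun x => ⟨x.2.1 ∪ x.2.2, x.2.1⟩)
    (fun y => ⟨(y.2.sup id, (y.1 \ y.2).sup id), (y.2, y.1 \ y.2)⟩) ?_ ?_ ?_ ?_ ?_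
  · rintro ⟨⟨I, J⟩, σ, τ⟩ hx
    simp only [Finset.mem_sigma, Finset.mem_filter, Finset.mem_univ, true_and,
      Finset.mem_product] at hx
    obtain ⟨⟨hIJ, hIJS⟩, hσ, hτ⟩ := hx
    rw [mem_sp] at hσ hτ
    simp only [Finset.mem_sigma, Finset.mem_powerset]
    constructor
    · rw [mem_sp]
      refine ⟨?_, ?_, ?_⟩
      · intro B hB
        rcases Finset.mem_union.mp hB with h | h
        exacts [hσ.1 B h, hτ.1 B h]
      · intro B hB C hC hne
        rcases Finset.mem_union.mp hB with hB | hB <;>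
          rcases Finset.mem_union.mp hC with hC | hC
        · exact hσ.2.1 B hB C hC hne
        · exact Finset.disjoint_of_subset_left (hσ.2.2 ▸ Finset.le_sup (f := id) hB)
            (Finset.disjoint_of_subset_right (hτ.2.2 ▸ Finset.le_sup (f := id) hC) hIJ)
        · exact Finset.disjoint_of_subset_left (hτ.2.2 ▸ Finset.le_sup (f := id) hB)
            (Finset.disjoint_of_subset_right (hσ.2.2 ▸ Finset.le_sup (f := id) hC) hIJ.symm)
        · exact hτ.2.1 B hB C hC hne
      · rw [Finset.sup_union, hσ.2.2, hτ.2.2]; exact hIJS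
    · exact Finset.subset_union_left
  · rintro ⟨π, σ⟩ hy
    simp only [Finset.mem_sigma, Finset.mem_powerset] at hy
    obtain ⟨hπ, hσ⟩ := hy
    simp only [Finset.mem_sigma, Finset.mem_filter, Finset.mem_univ, true_and,
      Finset.mem_product]
    have hπ' := mem_sp.mp hπ
    refine ⟨⟨?_, ?_⟩, subset_mem_sp hπ hσ, subset_mem_sp hπ (Finset.sdiff_subset)⟩
    · rw [Finset.disjoint_left]
      intro x hx1 hx2
      rw [Finset.mem_sup] at hx1 hx2
      obtain ⟨B, hB, hxB⟩ := hx1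
      obtain ⟨C, hC, hxC⟩ := hx2
      have hCne : B ≠ C := by
        rintro rfl
        exact (Finset.mem_sdiff.mp hC).2 hB
      exact Finset.disjoint_left.mp
        (hπ'.2.1 B (hσ hB) C ((Finset.sdiff_subset) hC) hCne) hxB hxC
    · rw [← Finset.sup_eq_union, ← Finset.sup_union, Finset.union_sdiff_of_subset hσ, hπ'.2.2]
  · rintro ⟨⟨I, J⟩, σ, τ⟩ hx
    simp only [Finset.mem_sigma, Finset.mem_filter, Finset.mem_univ, true_and,
      Finset.mem_product] at hx
    obtain ⟨⟨hIJ, _⟩, hσ, hτ⟩ := hx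
    rw [mem_sp] at hσ hτ
    have hdisj : Disjoint σ τ := by
      rw [Finset.disjoint_left]
      intro B hB1 hB2
      have h1 : B ⊆ I := hσ.2.2 ▸ Finset.le_sup (f := id) hB1
      have h2 : B ⊆ J := hτ.2.2 ▸ Finset.le_sup (f := id) hB2
      exact (hσ.1 B hB1).ne_empty
        ((Finset.disjoint_of_subset_left h1 hIJ).eq_bot_of_le h2)
    have hsd : (σ ∪ τ) \ σ = τ := Finset.union_sdiff_cancel_left hdisj
    simp only [hsd, hσ.2.2, hτ.2.2]
  · rintro ⟨π, σ⟩ hy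
    simp only [Finset.mem_sigma, Finset.mem_powerset] at hy
    simp only [Finset.union_sdiff_of_subset hy.2]
  · rintro ⟨⟨I, J⟩, σ, τ⟩ hx
    simp only [Finset.mem_sigma, Finset.mem_filter, Finset.mem_univ, true_and,
      Finset.mem_product] at hx
    obtain ⟨⟨hIJ, _⟩, hσ, hτ⟩ := hx
    rw [mem_sp] at hσ hτ
    have hdisj : Disjoint σ τ := by
      rw [Finset.disjoint_left]
      intro B hB1 hB2
      have h1 : B ⊆ I := hσ.2.2 ▸ Finset.le_sup (f := id) hB1
      have h2 : B ⊆ J := hτ.2.2 ▸ Finset.le_sup (f := id) hB2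
      exact (hσ.1 B hB1).ne_empty
        ((Finset.disjoint_of_subset_left h1 hIJ).eq_bot_of_le h2)
    simp only [Finset.union_sdiff_cancel_left hdisj]

lemma block_ssubset {S : Finset (Fin r)} {π : Finset (Finset (Fin r))}
    (hπ : π ∈ (setPartitions S).filter (fun π => 2 ≤ π.card))
    {B : Finset (Fin r)} (hB : B ∈ π) : B ⊂ S := by
  rw [Finset.mem_filter, mem_sp] at hπ
  obtain ⟨⟨h1, h2, h3⟩, hc⟩ := hπ
  have hBS : B ⊆ S := h3 ▸ Finset.le_sup (f := id) hB
  refine Finset.ssubset_iff_subset_ne.mpr ⟨hBS, ?_⟩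
  rintro rfl
  obtain ⟨C, hC, hne⟩ := Finset.exists_mem_ne hc B
  have hCS : C ⊆ B := h3 ▸ Finset.le_sup (f := id) hC
  exact (h1 C hC).ne_empty ((h2 C hC B hB hne).eq_bot_of_le hCS)

end SPaux

/- If `nE` is the convolution of `nF` and `nG`, then the residual classes `ΔE`, defined
recursively by subtracting, over all set partitions into at least two blocks, the products of
residual classes of the blocks, are additive: `ΔE = ΔF + ΔG`. -/
open Classical in
theorem stmt_0 {A : Type*} [CommRing A] {r : ℕ} (hr : 1 ≤ r)
    (nF nG nE ΔF ΔG ΔE : Finset (Fin r) → A)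
    (hnF0 : nF ∅ = 1) (hnG0 : nG ∅ = 1) (hnE0 : nE ∅ = 1)
    (hconv : ∀ S : Finset (Fin r), S.Nonempty →
      nE S = ∑ p ∈ Finset.univ.filter
          (fun p : Finset (Fin r) × Finset (Fin r) => Disjoint p.1 p.2 ∧ p.1 ∪ p.2 = S),
        nF p.1 * nG p.2)
    (hΔF : ∀ S : Finset (Fin r), S.Nonempty →
      ΔF S = nF S - ∑ π ∈ (setPartitions S).filter (fun π => 2 ≤ π.card), ∏ B ∈ π, ΔF B)
    (hΔG : ∀ S : Finset (Fin r), S.Nonempty →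
      ΔG S = nG S - ∑ π ∈ (setPartitions S).filter (fun π => 2 ≤ π.card), ∏ B ∈ π, ΔG B)
    (hΔE : ∀ S : Finset (Fin r), S.Nonempty →
      ΔE S = nE S - ∑ π ∈ (setPartitions S).filter (fun π => 2 ≤ π.card), ∏ B ∈ π, ΔE B) :
    ∀ S : Finset (Fin r), S.Nonempty → ΔE S = ΔF S + ΔG S := by
  intro S
  induction S using Finset.strongInductionOn with
  | _ S ih =>
    intro hS
    have hF := SPaux.n_as_sum nF ΔF hnF0 hΔF
    have hG := SPaux.n_as_sum nG ΔG hnG0 hΔG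
    have hE : nE S = ∑ π ∈ setPartitions S, ∏ B ∈ π, (ΔF B + ΔG B) := by
      rw [hconv S hS, ← SPaux.conv_eq ΔF ΔG S]
      exact Finset.sum_congr rfl fun p _ => by rw [hF p.1, hG p.2]
    have hprod : ∀ π ∈ (setPartitions S).filter (fun π => 2 ≤ π.card),
        ∏ B ∈ π, ΔE B = ∏ B ∈ π, (ΔF B + ΔG B) := by
      intro π hπ
      refine Finset.prod_congr rfl fun B hB => ?_
      have hss := SPaux.block_ssubset hπ hB
      have hBne : B.Nonempty := by
        rw [Finset.mem_filter, SPaux.mem_sp] at hπ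
        exact hπ.1.1 B hB
      exact ih B hss hBne
    rw [hΔE S hS, Finset.sum_congr rfl hprod, hE, SPaux.sum_sp_split _ hS]
    ring
end

section
/- Let A be a commutative ring, r ≥ 1, and let Δ^f and Δ^g assign elements of A to every nonempty subset of {1,…,r}. For h ∈ {f, g} and each nonempty subset I of {1,…,r}, define n^h(I) = Σ_π ∏_{B ∈ π} Δ^h(B), the sum over all set partitions π of I. Then for every nonempty subset S of {1,…,r}: Σ n^f(I)·n^g(J), summed over all ordered pairs (I, J) of nonempty disjoint subsets with I ∪ J = S, equals Σ ∏_{B ∈ π} Δ^{c(B)}(B), summed over all pairs (π, c) consisting of a set partition π of S together with a coloring c : π → {f, g} that attains both values f and g (i.e., not all blocks receive the same color). -/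
open Classical

variable {r : ℕ}

lemma mem_setPartitions {S : Finset (Fin r)} {π : Finset (Finset (Fin r))} :
    π ∈ setPartitions S ↔
      (∀ B ∈ π, B.Nonempty) ∧ (∀ B ∈ π, ∀ C ∈ π, B ≠ C → Disjoint B C) ∧ π.sup id = S := by
  simp [setPartitions]

lemma block_subset {S : Finset (Fin r)} {π : Finset (Finset (Fin r))}
    (h : π ∈ setPartitions S) {B} (hB : B ∈ π) : B ⊆ S := by
  rw [mem_setPartitions] at h
  exact h.2.2 ▸ Finset.le_sup (f := id) hB

lemma disjoint_parts {I J : Finset (Fin r)} {π1 π2 : Finset (Finset (Fin r))}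
    (h1 : π1 ∈ setPartitions I) (h2 : π2 ∈ setPartitions J) (hd : Disjoint I J) :
    Disjoint π1 π2 := by
  rw [Finset.disjoint_left]
  intro B hB1 hB2
  obtain ⟨x, hx⟩ := (mem_setPartitions.1 h1).1 B hB1
  exact Finset.disjoint_left.1 hd (block_subset h1 hB1 hx) (block_subset h2 hB2 hx)

lemma union_parts {I J : Finset (Fin r)} {π1 π2 : Finset (Finset (Fin r))}
    (h1 : π1 ∈ setPartitions I) (h2 : π2 ∈ setPartitions J) (hd : Disjoint I J) :
    π1 ∪ π2 ∈ setPartitions (I ∪ J) := by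
  obtain ⟨hne1, hdis1, hsup1⟩ := mem_setPartitions.1 h1
  obtain ⟨hne2, hdis2, hsup2⟩ := mem_setPartitions.1 h2
  rw [mem_setPartitions]
  refine ⟨?_, ?_, ?_⟩
  · intro B hB; rcases Finset.mem_union.1 hB with h | h
    exacts [hne1 B h, hne2 B h]
  · intro B hB C hC hne
    rcases Finset.mem_union.1 hB with hB' | hB' <;> rcases Finset.mem_union.1 hC with hC' | hC'
    · exact hdis1 B hB' C hC' hne
    · exact hd.mono (hsup1 ▸ Finset.le_sup (f := id) hB') (hsup2 ▸ Finset.le_sup (f := id) hC')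
    · exact hd.symm.mono (hsup2 ▸ Finset.le_sup (f := id) hB') (hsup1 ▸ Finset.le_sup (f := id) hC')
    · exact hdis2 B hB' C hC' hne
  · rw [Finset.sup_union, hsup1, hsup2]; rfl

lemma parts_nonempty {I : Finset (Fin r)} {π1 : Finset (Finset (Fin r))}
    (h1 : π1 ∈ setPartitions I) (hI : I.Nonempty) : π1.Nonempty := by
  rcases Finset.eq_empty_or_nonempty π1 with h | h
  · exfalso
    have := (mem_setPartitions.1 h1).2.2
    rw [h] at this
    simp at this
    exact hI.ne_empty this.symm
  · exact h

abbrev ColSig (r : ℕ) := Σ π : Finset (Finset (Fin r)), {B // B ∈ π} → Bool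

noncomputable def trueBlocks (y : ColSig r) : Finset (Finset (Fin r)) :=
  (y.1.attach.filter fun B => y.2 B = true).image Subtype.val

noncomputable def falseBlocks (y : ColSig r) : Finset (Finset (Fin r)) :=
  (y.1.attach.filter fun B => y.2 B = false).image Subtype.val

lemma mem_trueBlocks {y : ColSig r} {B} :
    B ∈ trueBlocks y ↔ ∃ h : B ∈ y.1, y.2 ⟨B, h⟩ = true := by
  simp only [trueBlocks, Finset.mem_image, Finset.mem_filter, Finset.mem_attach, true_and]
  constructor
  · rintro ⟨⟨B', hB'⟩, hc, rfl⟩; exact ⟨hB', hc⟩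
  · rintro ⟨h, hc⟩; exact ⟨⟨B, h⟩, hc, rfl⟩

lemma mem_falseBlocks {y : ColSig r} {B} :
    B ∈ falseBlocks y ↔ ∃ h : B ∈ y.1, y.2 ⟨B, h⟩ = false := by
  simp only [falseBlocks, Finset.mem_image, Finset.mem_filter, Finset.mem_attach, true_and]
  constructor
  · rintro ⟨⟨B', hB'⟩, hc, rfl⟩; exact ⟨hB', hc⟩
  · rintro ⟨h, hc⟩; exact ⟨⟨B, h⟩, hc, rfl⟩

lemma trueBlocks_union_falseBlocks (y : ColSig r) : trueBlocks y ∪ falseBlocks y = y.1 := by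
  ext B
  simp only [Finset.mem_union, mem_trueBlocks, mem_falseBlocks]
  constructor
  · rintro (⟨h, _⟩ | ⟨h, _⟩) <;> exact h
  · intro h
    rcases Bool.eq_false_or_eq_true (y.2 ⟨B, h⟩) with hc | hc
    · exact Or.inl ⟨h, hc⟩
    · exact Or.inr ⟨h, hc⟩

lemma disjoint_trueBlocks_falseBlocks (y : ColSig r) :
    Disjoint (trueBlocks y) (falseBlocks y) := by
  rw [Finset.disjoint_left]
  intro B hT hF
  obtain ⟨h, hc⟩ := mem_trueBlocks.1 hT
  obtain ⟨h', hc'⟩ := mem_falseBlocks.1 hF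
  rw [hc] at hc'
  exact Bool.noConfusion hc'

lemma sub_partition {S : Finset (Fin r)} {π π' : Finset (Finset (Fin r))}
    (hsub : π' ⊆ π) (h : π ∈ setPartitions S) : π' ∈ setPartitions (π'.sup id) := by
  obtain ⟨hne, hdis, _⟩ := mem_setPartitions.1 h
  exact mem_setPartitions.2
    ⟨fun B hB => hne B (hsub hB), fun B hB C hC h' => hdis B (hsub hB) C (hsub hC) h', rfl⟩

lemma sup_nonempty_of_mem {π : Finset (Finset (Fin r))} {B : Finset (Fin r)}
    (hB : B ∈ π) (hBne : B.Nonempty) : (π.sup id).Nonempty := by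
  obtain ⟨x, hx⟩ := hBne
  exact ⟨x, (Finset.le_sup (f := id) hB) hx⟩

lemma disjoint_sups {S : Finset (Fin r)} {π : Finset (Finset (Fin r))} (h : π ∈ setPartitions S)
    (y : ColSig r) (hy : y.1 = π) :
    Disjoint ((trueBlocks y).sup id) ((falseBlocks y).sup id) := by
  subst hy
  obtain ⟨hne, hdis, _⟩ := mem_setPartitions.1 h
  rw [Finset.disjoint_left]
  intro x hxT hxF
  obtain ⟨B, hB, hxB⟩ := Finset.mem_sup.1 hxT
  obtain ⟨C, hC, hxC⟩ := Finset.mem_sup.1 hxF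
  have hBC : B ≠ C := by
    rintro rfl
    exact Finset.disjoint_left.1 (disjoint_trueBlocks_falseBlocks y) hB hC
  have hBy : B ∈ y.1 := (mem_trueBlocks.1 hB).1
  have hCy : C ∈ y.1 := (mem_falseBlocks.1 hC).1
  exact Finset.disjoint_left.1 (hdis B hBy C hCy hBC) hxB hxC

lemma sigma_coloring_ext {π π' : Finset (Finset (Fin r))} (h : π = π')
    (c : {B // B ∈ π} → Bool) (c' : {B // B ∈ π'} → Bool)
    (hc : ∀ B (hB : B ∈ π) (hB' : B ∈ π'), c ⟨B, hB⟩ = c' ⟨B, hB'⟩) :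
    (⟨π, c⟩ : ColSig r) = ⟨π', c'⟩ := by
  subst h
  have : c = c' := by funext B; exact hc B B.2 B.2
  rw [this]

/- If `nF` and `nG` are the partition sums of `ΔF` and `ΔG`, then the convolution cross-terms
`Σ nF(I)·nG(J)` over nonempty disjoint `I, J` with `I ∪ J = S` equal the sum, over set
partitions `π` of `S` together with a non-constant two-coloring `c` of the blocks
(`true ↦ f`, `false ↦ g`), of the product of `Δ^{c(B)}(B)` over the blocks. -/
set_option maxHeartbeats 1000000 in
open Classical in
theorem stmt_1 {A : Type*} [CommRing A] {r : ℕ} (hr : 1 ≤ r)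
    (ΔF ΔG nF nG : Finset (Fin r) → A)
    (hnF : ∀ I : Finset (Fin r), I.Nonempty →
      nF I = ∑ π ∈ setPartitions I, ∏ B ∈ π, ΔF B)
    (hnG : ∀ I : Finset (Fin r), I.Nonempty →
      nG I = ∑ π ∈ setPartitions I, ∏ B ∈ π, ΔG B) :
    ∀ S : Finset (Fin r), S.Nonempty →
      (∑ p ∈ Finset.univ.filter
          (fun p : Finset (Fin r) × Finset (Fin r) =>
            p.1.Nonempty ∧ p.2.Nonempty ∧ Disjoint p.1 p.2 ∧ p.1 ∪ p.2 = S),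
        nF p.1 * nG p.2)
      = ∑ π ∈ setPartitions S,
          ∑ c ∈ (Finset.univ : Finset ({B // B ∈ π} → Bool)).filter
              (fun c => (∃ B, c B = true) ∧ (∃ B, c B = false)),
            ∏ B ∈ π.attach, (if c B = true then ΔF B.1 else ΔG B.1) := by
  intro S hS
  set P := Finset.univ.filter
      (fun p : Finset (Fin r) × Finset (Fin r) =>
        p.1.Nonempty ∧ p.2.Nonempty ∧ Disjoint p.1 p.2 ∧ p.1 ∪ p.2 = S) with hP
  calc (∑ p ∈ P, nF p.1 * nG p.2)
      = ∑ p ∈ P, ∑ q ∈ setPartitions p.1 ×ˢ setPartitions p.2,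
          (∏ B ∈ q.1, ΔF B) * (∏ B ∈ q.2, ΔG B) := by
        refine Finset.sum_congr rfl fun p hp => ?_
        simp only [hP, Finset.mem_filter, Finset.mem_univ, true_and] at hp
        rw [hnF _ hp.1, hnG _ hp.2.1, Finset.sum_mul_sum, ← Finset.sum_product']
    _ = ∑ x ∈ P.sigma (fun p => setPartitions p.1 ×ˢ setPartitions p.2),
          (∏ B ∈ x.2.1, ΔF B) * (∏ B ∈ x.2.2, ΔG B) := by
        rw [Finset.sum_sigma]
    _ = ∑ y ∈ (setPartitions S).sigma
          (fun π => (Finset.univ : Finset ({B // B ∈ π} → Bool)).filter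
              (fun c => (∃ B, c B = true) ∧ (∃ B, c B = false))),
          ∏ B ∈ y.1.attach, (if y.2 B = true then ΔF B.1 else ΔG B.1) := by
        refine Finset.sum_bij'
          (fun x _ => (⟨x.2.1 ∪ x.2.2, fun B => decide (B.1 ∈ x.2.1)⟩ : ColSig r))
          (fun y _ => ⟨((trueBlocks y).sup id, (falseBlocks y).sup id),
            (trueBlocks y, falseBlocks y)⟩) ?_ ?_ ?_ ?_ ?_
        · -- maps into target
          rintro ⟨⟨I, J⟩, π1, π2⟩ hx
          rw [Finset.mem_sigma] at hx
          obtain ⟨hx1, hx2⟩ := hx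
          simp only [hP, Finset.mem_filter, Finset.mem_univ, true_and] at hx1
          obtain ⟨hI, hJ, hd, hU⟩ := hx1
          rw [Finset.mem_product] at hx2
          obtain ⟨h1, h2⟩ := hx2
          rw [Finset.mem_sigma]
          constructor
          · exact hU ▸ union_parts h1 h2 hd
          · rw [Finset.mem_filter]
            refine ⟨Finset.mem_univ _, ?_, ?_⟩
            · obtain ⟨B, hB⟩ := parts_nonempty h1 hI
              exact ⟨⟨B, Finset.mem_union_left _ hB⟩, by simp [hB]⟩
            · obtain ⟨B, hB⟩ := parts_nonempty h2 hJ
              have hBn : B ∉ π1 := Finset.disjoint_right.1 (disjoint_parts h1 h2 hd) hB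
              exact ⟨⟨B, Finset.mem_union_right _ hB⟩, by simp [hBn]⟩
        · -- maps into source
          rintro ⟨π, c⟩ hy
          rw [Finset.mem_sigma] at hy
          obtain ⟨hy1, hy2⟩ := hy
          rw [Finset.mem_filter] at hy2
          obtain ⟨-, ⟨Bt, hBt⟩, ⟨Bf, hBf⟩⟩ := hy2
          have hy1' : π ∈ setPartitions S := hy1
          have hTsub : trueBlocks (⟨π, c⟩ : ColSig r) ⊆ π :=
            fun B hB => (mem_trueBlocks.1 hB).1
          have hFsub : falseBlocks (⟨π, c⟩ : ColSig r) ⊆ π :=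
            fun B hB => (mem_falseBlocks.1 hB).1
          have hBtT : Bt.1 ∈ trueBlocks (⟨π, c⟩ : ColSig r) := mem_trueBlocks.2 ⟨Bt.2, hBt⟩
          have hBfF : Bf.1 ∈ falseBlocks (⟨π, c⟩ : ColSig r) := mem_falseBlocks.2 ⟨Bf.2, hBf⟩
          have hne : ∀ B ∈ π, B.Nonempty := (mem_setPartitions.1 hy1').1
          refine Finset.mem_sigma.2 ⟨?_, ?_⟩
          · simp only [hP, Finset.mem_filter, Finset.mem_univ, true_and]
            refine ⟨sup_nonempty_of_mem hBtT (hne _ Bt.2),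
              sup_nonempty_of_mem hBfF (hne _ Bf.2),
              disjoint_sups hy1' (⟨π, c⟩ : ColSig r) rfl, ?_⟩
            have h3 : (trueBlocks (⟨π, c⟩ : ColSig r) ∪ falseBlocks (⟨π, c⟩ : ColSig r)).sup id
                = S := by
              rw [trueBlocks_union_falseBlocks]
              exact (mem_setPartitions.1 hy1').2.2
            rw [Finset.sup_union] at h3
            exact h3
          · exact Finset.mem_product.2 ⟨sub_partition hTsub hy1', sub_partition hFsub hy1'⟩
        · -- left inverse
          rintro ⟨⟨I, J⟩, π1, π2⟩ hx
          rw [Finset.mem_sigma] at hx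
          obtain ⟨hx1, hx2⟩ := hx
          simp only [hP, Finset.mem_filter, Finset.mem_univ, true_and] at hx1
          obtain ⟨hI, hJ, hd, hU⟩ := hx1
          rw [Finset.mem_product] at hx2
          obtain ⟨h1, h2⟩ := hx2
          have hdp := disjoint_parts h1 h2 hd
          have hTB : trueBlocks (⟨π1 ∪ π2, fun B => decide (B.1 ∈ π1)⟩ : ColSig r) = π1 := by
            ext B
            rw [mem_trueBlocks]
            constructor
            · rintro ⟨h, hc⟩; simpa using hc
            · intro h; exact ⟨Finset.mem_union_left _ h, by simpa using h⟩
          have hFB : falseBlocks (⟨π1 ∪ π2, fun B => decide (B.1 ∈ π1)⟩ : ColSig r) = π2 := by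
            ext B
            rw [mem_falseBlocks]
            constructor
            · rintro ⟨h, hc⟩
              simp only [decide_eq_false_iff_not] at hc
              rcases Finset.mem_union.1 h with h' | h'
              · exact absurd h' hc
              · exact h'
            · intro h
              refine ⟨Finset.mem_union_right _ h, ?_⟩
              simp [Finset.disjoint_right.1 hdp h]
          simp only [hTB, hFB, (mem_setPartitions.1 h1).2.2, (mem_setPartitions.1 h2).2.2]
        · -- right inverse
          rintro ⟨π, c⟩ hy
          refine sigma_coloring_ext (trueBlocks_union_falseBlocks ⟨π, c⟩) _ _ ?_
          intro B hB hB'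
          rcases Bool.eq_false_or_eq_true (c ⟨B, hB'⟩) with hc | hc
          · rw [hc]
            have hm : B ∈ trueBlocks (⟨π, c⟩ : ColSig r) := mem_trueBlocks.2 ⟨hB', hc⟩
            simp [hm]
          · rw [hc]
            have hm : B ∉ trueBlocks (⟨π, c⟩ : ColSig r) := by
              rw [mem_trueBlocks]
              rintro ⟨h, hct⟩
              have h5 : c ⟨B, hB'⟩ = true := hct
              rw [hc] at h5
              exact Bool.noConfusion h5
            simp [hm]
        · -- terms agree
          rintro ⟨⟨I, J⟩, π1, π2⟩ hx
          rw [Finset.mem_sigma] at hx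
          obtain ⟨hx1, hx2⟩ := hx
          simp only [hP, Finset.mem_filter, Finset.mem_univ, true_and] at hx1
          obtain ⟨hI, hJ, hd, hU⟩ := hx1
          rw [Finset.mem_product] at hx2
          obtain ⟨h1, h2⟩ := hx2
          have h1' : π1 ∈ setPartitions I := h1
          have h2' : π2 ∈ setPartitions J := h2
          have hdp : Disjoint π1 π2 := disjoint_parts h1' h2' hd
          rw [Finset.prod_attach (π1 ∪ π2)
            (fun b => if decide (b ∈ π1) = true then ΔF b else ΔG b)]
          rw [Finset.prod_union hdp]
          congr 1
          · exact (Finset.prod_congr rfl fun B hB => by simp [hB]).symm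
          · exact (Finset.prod_congr rfl fun B hB => by
              simp [Finset.disjoint_right.1 hdp hB]).symm
    _ = _ := by rw [Finset.sum_sigma]
end

section
/- Let A and B be commutative rings, φ : B → A a ring homomorphism, and π : A → B an additive map satisfying the projection formula π(a·φ(b)) = π(a)·b for all a ∈ A, b ∈ B. Let r ≥ 1 and let R assign an element of A to every nonempty subset of {1,…,r}. For the full index set S = {1,…,r}, define n = Σ_𝒫 ∏_{B ∈ 𝒫} π(R(B)) ∈ B, the sum over all set partitions 𝒫 of S, and define m = Σ_𝒫 R(B₀) · ∏_{B ∈ 𝒫, B ≠ B₀} φ(π(R(B))) ∈ A, where in each partition 𝒫 the block B₀ denotes the block containing the element 1. Then π(m) = n. -/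
/- Projection formula for multi-singularity Thom polynomials: with `φ` playing the role of the
pullback `f*`, `π` the pushforward `f_*` (an additive map satisfying `π(a·φ(b)) = π(a)·b`),
and `R` the residual classes, the pushforward of the source polynomial
`m = Σ_𝒫 R(B₀)·Π_{B ≠ B₀} φ(π(R(B)))` (where `B₀` is the block of the partition `𝒫` of
`{1,…,r}` containing the element `1`, here the index `0 : Fin r`) equals the target polynomial
`n = Σ_𝒫 Π_{B ∈ 𝒫} π(R(B))`. -/
open Classical in
theorem stmt_6 {A B : Type*} [CommRing A] [CommRing B] (φ : B →+* A) (π : A →+ B)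
    (hproj : ∀ (a : A) (b : B), π (a * φ b) = π a * b)
    {r : ℕ} (hr : 1 ≤ r) (R : Finset (Fin r) → A) :
    π (∑ P ∈ setPartitions (Finset.univ : Finset (Fin r)),
        ∑ B₀ ∈ P.filter (fun B => (⟨0, hr⟩ : Fin r) ∈ B),
          R B₀ * ∏ Bl ∈ P.erase B₀, φ (π (R Bl))) =
      ∑ P ∈ setPartitions (Finset.univ : Finset (Fin r)), ∏ Bl ∈ P, π (R Bl) := by
  rw [map_sum]
  refine Finset.sum_congr rfl fun P hP => ?_
  simp only [setPartitions, Finset.mem_filter, Finset.mem_univ, true_and] at hP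
  obtain ⟨hne, hdisj, hsup⟩ := hP
  have h0 : (⟨0, hr⟩ : Fin r) ∈ P.sup id := by
    rw [hsup]; exact Finset.mem_univ _
  rw [Finset.mem_sup] at h0
  obtain ⟨B₀, hB₀P, hB₀⟩ := h0
  have hfilt : P.filter (fun Bl => (⟨0, hr⟩ : Fin r) ∈ Bl) = {B₀} := by
    apply Finset.eq_singleton_iff_unique_mem.2
    refine ⟨Finset.mem_filter.2 ⟨hB₀P, hB₀⟩, fun C hC => ?_⟩
    rw [Finset.mem_filter] at hC
    by_contra hCB
    exact Finset.disjoint_left.1 (hdisj C hC.1 B₀ hB₀P hCB) hC.2 hB₀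
  rw [hfilt, Finset.sum_singleton, ← map_prod φ, hproj,
    ← Finset.mul_prod_erase P (fun Bl => π (R Bl)) hB₀P]
end
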